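/- Let n ≥ k > 2, let 𝔽 be a field and let S_k ⊆ C([n],k). Then the simplicial matroid Sim_k^n(S_k) is supersolvable if and only if it has no circuits, i.e., if and only if the vectors {∂_k F : F ∈ S_k} are linearly independent in 𝔽^{C([n],k−1)}. -/

import Mathlib

/-!
Common definitions for simplicial matroids, following Cordovil–Lemos–Linhares Sales,
"Dirac's theorem on simplicial matroids".

We model `[n] = {1,…,n}` by `Fin n`, and a subset of `[n]` by a `Finset (Fin n)`.
A family `S_k ⊆ C([n],k)` is a `Finset (Finset (Fin n))` (all of whose members
have cardinality `k`, which is imposed by hypotheses in the theorems).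
-/

open Finset

/-- The incidence number `[F' : F]`: if `F = i₁ < i₂ < ⋯ < iₘ` and `F' = F \ {iⱼ}`
then `[F' : F] = (-1)ʲ` (with `j` the 1-based position of the deleted element),
and `[F' : F] = 0` otherwise. -/
def inc {n : ℕ} (F' F : Finset (Fin n)) : ℤ :=
  ∑ i ∈ F, if F' = F.erase i then (-1 : ℤ) ^ (F.filter (fun j => j ≤ i)).card else 0

/-- The family `C([n], m)` of `m`-element subsets of `[n]`, as a type. -/
abbrev Csets (n m : ℕ) := {F : Finset (Fin n) // F.card = m}

/-- `∂_k F`, the boundary of a single `k`-subset `F` of `[n]`,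
as a vector of `𝔽^{C([n],k-1)}`. -/
def bvec (𝔽 : Type*) [Field 𝔽] (n k : ℕ) (F : Finset (Fin n)) : Csets n (k - 1) → 𝔽 :=
  fun F' => ((inc F'.1 F : ℤ) : 𝔽)

/-- Independence in the simplicial matroid `Sim_k^n(S_k)` over `𝔽`:
`X ⊆ S_k` is independent iff the vectors `∂_k F`, `F ∈ X`, are linearly independent. -/
def SimIndep (𝔽 : Type*) [Field 𝔽] (n k : ℕ) (Sk X : Finset (Finset (Fin n))) : Prop :=
  X ⊆ Sk ∧ LinearIndependent 𝔽 (fun F : X => bvec 𝔽 n k F.1)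

/-- A circuit of `Sim_k^n(S_k)`: a minimal dependent subset of the ground set. -/
def SimCircuit (𝔽 : Type*) [Field 𝔽] (n k : ℕ) (Sk C : Finset (Finset (Fin n))) : Prop :=
  C ⊆ Sk ∧ ¬ LinearIndependent 𝔽 (fun F : C => bvec 𝔽 n k F.1) ∧
    ∀ C' ⊂ C, LinearIndependent 𝔽 (fun F : C' => bvec 𝔽 n k F.1)

/-- The rank (in `Sim_k^n`) of a set `X` of `k`-subsets of `[n]`:
the dimension of the span of the boundaries of its members. -/
noncomputable def simRank (𝔽 : Type*) [Field 𝔽] (n k : ℕ) (X : Finset (Finset (Fin n))) : ℕ :=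
  Module.finrank 𝔽 (Submodule.span 𝔽 ((fun F => bvec 𝔽 n k F) '' (X : Set (Finset (Fin n)))))

/-- A cocircuit of `Sim_k^n(S_k)`, i.e. a circuit of the dual matroid:
a minimal set `C ⊆ S_k` whose complement does not span (`X` is independent in the dual
matroid iff `r(E ∖ X) = r(E)`). -/
def SimCocircuit (𝔽 : Type*) [Field 𝔽] (n k : ℕ) (Sk C : Finset (Finset (Fin n))) : Prop :=
  C ⊆ Sk ∧ simRank 𝔽 n k (Sk \ C) < simRank 𝔽 n k Sk ∧
    ∀ C' ⊂ C, simRank 𝔽 n k (Sk \ C') = simRank 𝔽 n k Sk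

/-- The boundary map `∂_k : 𝔽^{S_k} → 𝔽^{C([n],k-1)}`. -/
noncomputable def bdryMap (𝔽 : Type*) [Field 𝔽] (n k : ℕ) (Sk : Finset (Finset (Fin n))) :
    (↥Sk → 𝔽) →ₗ[𝔽] (Csets n (k - 1) → 𝔽) :=
  Matrix.mulVecLin (Matrix.of fun (F' : Csets n (k - 1)) (F : ↥Sk) => ((inc F'.1 F.1 : ℤ) : 𝔽))

/-- The coboundary `δ^{k-1} V` of a `(k-1)`-subset `V` of `[n]`,
as a vector of `𝔽^{S_k}`; its `F`-coordinate is `[V : F]`. -/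
def cobdry (𝔽 : Type*) [Field 𝔽] {n : ℕ} (Sk : Finset (Finset (Fin n)))
    (V : Finset (Fin n)) : ↥Sk → 𝔽 :=
  fun F => ((inc V F.1 : ℤ) : 𝔽)

/-- The boundary `∂_{k+1} X` of a `(k+1)`-subset `X` of `[n]`, regarded as a vector
of `𝔽^{S_k}`; its `F`-coordinate is `[F : X]`. -/
def pbdry (𝔽 : Type*) [Field 𝔽] {n : ℕ} (Sk : Finset (Finset (Fin n)))
    (X : Finset (Fin n)) : ↥Sk → 𝔽 :=
  fun F => ((inc F.1 X : ℤ) : 𝔽)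

open scoped Classical in
/-- The support of a vector of `𝔽^{S_k}`, as a set of `k`-subsets of `[n]`. -/
noncomputable def suppFin {𝔽 : Type*} [Field 𝔽] {n : ℕ} {Sk : Finset (Finset (Fin n))}
    (v : ↥Sk → 𝔽) : Finset (Finset (Fin n)) :=
  (Sk.attach.filter fun F => v F ≠ 0).image Subtype.val

/-- `supp(δ^{k-1} V) ⊆ S_k`. -/
noncomputable def suppδ (𝔽 : Type*) [Field 𝔽] {n : ℕ} (Sk : Finset (Finset (Fin n)))
    (V : Finset (Fin n)) : Finset (Finset (Fin n)) :=
  suppFin (cobdry 𝔽 Sk V)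

/-- The cocircuit space of `Sim_k^n(S_k)`: the orthogonal complement, with respect to the
standard bilinear form on `𝔽^{S_k}`, of the circuit space `ker ∂_k`. -/
noncomputable def cocircSpace (𝔽 : Type*) [Field 𝔽] (n k : ℕ) (Sk : Finset (Finset (Fin n))) :
    Submodule 𝔽 (↥Sk → 𝔽) where
  carrier := {w | ∀ v ∈ LinearMap.ker (bdryMap 𝔽 n k Sk), ∑ F, v F * w F = 0}
  zero_mem' := by intro v hv; simp
  add_mem' := by
    intro a b ha hb v hv
    have h1 := ha v hv
    have h2 := hb v hv
    simp only [Pi.add_apply, mul_add, Finset.sum_add_distrib]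
    rw [h1, h2, add_zero]
  smul_mem' := by
    intro c w hw v hv
    have h := hw v hv
    simp only [Pi.smul_apply, smul_eq_mul]
    calc ∑ F, v F * (c * w F) = ∑ F, c * (v F * w F) := by
          exact Finset.sum_congr rfl fun F _ => by ring
      _ = c * ∑ F, v F * w F := (Finset.mul_sum _ _ _).symm
      _ = 0 := by rw [h, mul_zero]

/-- The faces of the `k`-hyperclique complex `⟨S_k⟩`: all `F ⊆ [n]` with `|F| < k`,
together with all `F` every `k`-element subset of which lies in `S_k`. -/
def IsFace {n : ℕ} (k : ℕ) (Sk : Finset (Finset (Fin n))) (F : Finset (Fin n)) : Prop :=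
  F.card < k ∨ ∀ G ⊆ F, G.card = k → G ∈ Sk

/-- A facet of `⟨S_k⟩`: an inclusion-maximal face. -/
def IsFacet {n : ℕ} (k : ℕ) (Sk : Finset (Finset (Fin n))) (F : Finset (Fin n)) : Prop :=
  IsFace k Sk F ∧ ∀ G, IsFace k Sk G → F ⊆ G → F = G

/-- `V` is simplicial in `⟨S_k⟩` if there is exactly one facet `X` of `⟨S_k⟩`
with `V ⊊ X`. -/
def SimplicialFace {n : ℕ} (k : ℕ) (Sk : Finset (Finset (Fin n))) (V : Finset (Fin n)) : Prop :=
  ∃! X, IsFacet k Sk X ∧ V ⊂ X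

/-- The `k`-skeleta of the complexes `Δ_0 = ⟨S_k⟩`, `Δ_{j+1} = Δ_j ∖∖ V_j`, where
`Δ ∖∖ V = ⟨(skeleton of Δ) ∖ supp(δ^{k-1} V)⟩` (0-indexed). -/
noncomputable def delSeq (𝔽 : Type*) [Field 𝔽] {n : ℕ} (Sk : Finset (Finset (Fin n)))
    (V : ℕ → Finset (Fin n)) : ℕ → Finset (Finset (Fin n))
  | 0 => Sk
  | j + 1 => delSeq 𝔽 Sk V j \ suppδ 𝔽 (delSeq 𝔽 Sk V j) (V j)

/-- `C*_j := supp(δ^{k-1} V_j) ∖ ⋃_{i<j} supp(δ^{k-1} V_i)` (0-indexed). -/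
noncomputable def Cstar (𝔽 : Type*) [Field 𝔽] {n : ℕ} (Sk : Finset (Finset (Fin n)))
    (V : ℕ → Finset (Fin n)) (j : ℕ) : Finset (Finset (Fin n)) :=
  suppδ 𝔽 Sk (V j) \ (Finset.range j).biUnion (fun i => suppδ 𝔽 Sk (V i))

/-- `(V_1,…,V_r)` (0-indexed: `V 0, …, V (r-1)`) is a basic linear sequence for `⟨S_k⟩`,
where `r` is the rank of `Sim_k^n(S_k)`: each `V_j` is a `(k-1)`-subset of `[n]` and each
`C*_j` is a cocircuit of `Sim_k^n(S_k(Δ_{j-1}))`. -/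
def BasicLinearSeq (𝔽 : Type*) [Field 𝔽] (n k : ℕ) (Sk : Finset (Finset (Fin n))) (r : ℕ)
    (V : ℕ → Finset (Fin n)) : Prop :=
  simRank 𝔽 n k Sk = r ∧ (∀ j < r, (V j).card = k - 1) ∧
    ∀ j < r, SimCocircuit 𝔽 n k (delSeq 𝔽 Sk V j) (Cstar 𝔽 Sk V j)

/-- `⟨S_k⟩` is D-perfect: there is a basic linear sequence `V_1,…,V_r` such that each `V_j`
is simplicial in `Δ_{j-1}`. -/
def DPerfect (𝔽 : Type*) [Field 𝔽] (n k : ℕ) (Sk : Finset (Finset (Fin n))) : Prop :=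
  ∃ V : ℕ → Finset (Fin n),
    BasicLinearSeq 𝔽 n k Sk (simRank 𝔽 n k Sk) V ∧
      ∀ j < simRank 𝔽 n k Sk, SimplicialFace k (delSeq 𝔽 Sk V j) (V j)

/-- A flat of `Sim_k^n(S_k)`: a closed subset of the ground set. -/
def SimFlat (𝔽 : Type*) [Field 𝔽] (n k : ℕ) (Sk X : Finset (Finset (Fin n))) : Prop :=
  X ⊆ Sk ∧ ∀ F ∈ Sk,
    bvec 𝔽 n k F ∈ Submodule.span 𝔽 ((fun G => bvec 𝔽 n k G) '' (X : Set (Finset (Fin n)))) →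
      F ∈ X

/-- A hyperplane of `Sim_k^n(S_k)`: a flat of rank one less than the rank of the matroid. -/
def SimHyperplane (𝔽 : Type*) [Field 𝔽] (n k : ℕ) (Sk H : Finset (Finset (Fin n))) : Prop :=
  SimFlat 𝔽 n k Sk H ∧ simRank 𝔽 n k H + 1 = simRank 𝔽 n k Sk

/-- A modular flat of `Sim_k^n(S_k)`:
`r(X) + r(Y) = r(X ∪ Y) + r(X ∩ Y)` for every flat `Y`. -/
def ModularFlat (𝔽 : Type*) [Field 𝔽] (n k : ℕ) (Sk X : Finset (Finset (Fin n))) : Prop :=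
  SimFlat 𝔽 n k Sk X ∧ ∀ Y, SimFlat 𝔽 n k Sk Y →
    simRank 𝔽 n k X + simRank 𝔽 n k Y = simRank 𝔽 n k (X ∪ Y) + simRank 𝔽 n k (X ∩ Y)

open scoped Classical in
/-- The closure of `X` in `Sim_k^n(S_k)`. -/
noncomputable def simClosure (𝔽 : Type*) [Field 𝔽] (n k : ℕ)
    (Sk X : Finset (Finset (Fin n))) : Finset (Finset (Fin n)) :=
  Sk.filter fun F =>
    bvec 𝔽 n k F ∈ Submodule.span 𝔽 ((fun G => bvec 𝔽 n k G) '' (X : Set (Finset (Fin n))))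

/-- `Sim_k^n(S_k)` is supersolvable: it admits a maximal chain of modular flats
`cl(∅) = X_0 ⊊ X_1 ⊊ ⋯ ⊊ X_r = S_k`, `r` the rank. -/
def Supersolvable (𝔽 : Type*) [Field 𝔽] (n k : ℕ) (Sk : Finset (Finset (Fin n))) : Prop :=
  ∃ X : ℕ → Finset (Finset (Fin n)),
    X 0 = simClosure 𝔽 n k Sk ∅ ∧ X (simRank 𝔽 n k Sk) = Sk ∧
      (∀ i < simRank 𝔽 n k Sk, X i ⊂ X (i + 1)) ∧
      ∀ i ≤ simRank 𝔽 n k Sk, ModularFlat 𝔽 n k Sk (X i)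

/-- `H` is a dense hyperplane of `Sim_k^n(ground)`: a hyperplane of the form
`ground ∖ supp(δ^{k-1} V)` for some `(k-1)`-subset `V` simplicial in `⟨ground⟩`. -/
def DenseHyp (𝔽 : Type*) [Field 𝔽] (n k : ℕ) (ground H : Finset (Finset (Fin n))) : Prop :=
  SimHyperplane 𝔽 n k ground H ∧
    ∃ V : Finset (Fin n), V.card = k - 1 ∧ SimplicialFace k ground V ∧
      H = ground \ suppδ 𝔽 ground V

/-- `Sim_k^n(S_k)` is superdense: there is a chain `∅ = X_0 ⊊ X_1 ⊊ ⋯ ⊊ X_r = S_k` of flats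
(`r` the rank) with each `X_i` a dense hyperplane of `Sim_k^n(X_{i+1})`. -/
def Superdense (𝔽 : Type*) [Field 𝔽] (n k : ℕ) (Sk : Finset (Finset (Fin n))) : Prop :=
  ∃ X : ℕ → Finset (Finset (Fin n)),
    X 0 = ∅ ∧ X (simRank 𝔽 n k Sk) = Sk ∧
      (∀ i ≤ simRank 𝔽 n k Sk, SimFlat 𝔽 n k Sk (X i)) ∧
      (∀ i < simRank 𝔽 n k Sk, X i ⊂ X (i + 1)) ∧
      ∀ i < simRank 𝔽 n k Sk, DenseHyp 𝔽 n k (X (i + 1)) (X i)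

/-- `Sim_k^n(S_k)` is triangulable over `𝔽`: the boundaries of the `(k+1)`-faces of `⟨S_k⟩`
span the circuit space `ker ∂_k`. -/
def Triangulable (𝔽 : Type*) [Field 𝔽] (n k : ℕ) (Sk : Finset (Finset (Fin n))) : Prop :=
  Submodule.span 𝔽
      {v : ↥Sk → 𝔽 | ∃ X : Finset (Fin n), X.card = k + 1 ∧ IsFace k Sk X ∧ v = pbdry 𝔽 Sk X}
    = LinearMap.ker (bdryMap 𝔽 n k Sk)

/-- `Sim_k^n(S_k)` is strongly triangulable over `𝔽`: there are `(k+1)`-faces `X_1,…,X_{m'}`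
of `⟨S_k⟩` whose boundaries span `ker ∂_k` and such that every circuit `C` has a
representing vector `C⃗` with support `C` which is a combination, with nonzero coefficients,
of boundaries `∂_{k+1} X_{i_j}` with `⋃_{F ∈ C} F = ⋃_j X_{i_j}`. -/
def StronglyTriangulable (𝔽 : Type*) [Field 𝔽] (n k : ℕ)
    (Sk : Finset (Finset (Fin n))) : Prop :=
  ∃ (m' : ℕ) (Xs : Fin m' → Finset (Fin n)),
    (∀ i, (Xs i).card = k + 1 ∧ IsFace k Sk (Xs i)) ∧
    Submodule.span 𝔽 (Set.range fun i => pbdry 𝔽 Sk (Xs i)) = LinearMap.ker (bdryMap 𝔽 n k Sk) ∧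
    ∀ C, SimCircuit 𝔽 n k Sk C →
      ∃ (s : ℕ) (idx : Fin s → Fin m') (a : Fin s → 𝔽) (Cv : ↥Sk → 𝔽),
        (∀ j, a j ≠ 0) ∧ suppFin Cv = C ∧
        Cv = ∑ j, a j • pbdry 𝔽 Sk (Xs (idx j)) ∧
        C.biUnion id = Finset.univ.biUnion fun j : Fin s => Xs (idx j)

/-- The simple graph `([n], S_2)`. -/
def graphOf {n : ℕ} (S2 : Finset (Finset (Fin n))) : SimpleGraph (Fin n) where
  Adj u v := u ≠ v ∧ ({u, v} : Finset (Fin n)) ∈ S2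
  symm := by
    constructor
    intro u v h
    exact ⟨h.1.symm, by rw [Finset.pair_comm]; exact h.2⟩
  loopless := by constructor; intro u h; exact h.1 rfl

/-- A simple graph is chordal if every cycle of length at least four has a chord, i.e. an
edge of the graph joining two non-consecutive vertices of the cycle. -/
def Chordal {α : Type*} (G : SimpleGraph α) : Prop :=
  ∀ (v : α) (w : G.Walk v v), w.IsCycle → 4 ≤ w.length →
    ∃ u₁ u₂, u₁ ∈ w.support ∧ u₂ ∈ w.support ∧ G.Adj u₁ u₂ ∧ s(u₁, u₂) ∉ w.edges

/-!
A family `T` of `k`-sets with `#T < k` never spans the boundary of a further `k`-set `g`: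
every facet `g \ {i}` would lie in a member of `T`, so by pigeonhole two facets lie in the same
member, which then equals `g`. In particular, for `k ≥ 3` any three boundaries are independent,
so every line `cl {e, f}` of `Sim_k^n(S_k)` has exactly two points.

In a chain of modular flats `X_0 ⊊ ⋯ ⊊ X_r` the ranks go up one at a time, and if a step
`X_i ⊊ X_{i+1}` added two points `e, f`, modularity of `X_i` with respect to the line
`cl {e, f} ⊆ X_{i+1}` would give `r(X_i ∩ cl {e, f}) ≥ 1`, i.e. a third point on that line.
Hence `#S_k ≤ r` and the boundaries are independent. Conversely, when they are independent,
rank is cardinality, every subset is a modular flat, and any maximal chain of subsets will do.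
-/

lemma Finset.subset_of_erase_subset_of_erase_subset {α : Type*} [DecidableEq α] {s t : Finset α}
    {i j : α} (hij : i ≠ j) (hi : s.erase i ⊆ t) (hj : s.erase j ⊆ t) : s ⊆ t := by
  intro x hx
  by_cases hxi : x = i
  · exact hj (mem_erase.2 ⟨hxi ▸ hij, hx⟩)
  · exact hi (mem_erase.2 ⟨hxi, hx⟩)

lemma apply_eq_self_of_lt_apply_succ {f : ℕ → ℕ} {r : ℕ} (hf : ∀ i < r, f i < f (i + 1))
    (hr : f r = r) : ∀ i ≤ r, f i = i := by
  have hlow : ∀ i ≤ r, i ≤ f i := by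
    intro i
    induction i with
    | zero => exact fun _ => Nat.zero_le _
    | succ i ih => intro hi; have := hf i hi; have := ih (by omega); omega
  have hhigh : ∀ j ≤ r, f (r - j) + j ≤ r := by
    intro j
    induction j with
    | zero => intro _; simp [hr]
    | succ j ih =>
      intro hj
      have := hf (r - (j + 1)) (by omega)
      rw [show r - (j + 1) + 1 = r - j by omega] at this
      have := ih (by omega)
      omega
  intro i hi
  have := hhigh (r - i) (by omega)
  rw [Nat.sub_sub_self hi] at this
  exact le_antisymm (by omega) (hlow i hi)

lemma Finset.exists_ssubset_chain {α : Type*} (s : Finset α) :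
    ∃ X : ℕ → Finset α, X 0 = ∅ ∧ X #s = s ∧ (∀ i < #s, X i ⊂ X (i + 1)) ∧ ∀ i, X i ⊆ s := by
  classical
  induction s using Finset.induction_on with
  | empty => exact ⟨fun _ => ∅, rfl, rfl, by simp, fun _ => subset_rfl⟩
  | insert a s has ih =>
    obtain ⟨X, h0, hs, hchain, hsub⟩ := ih
    refine ⟨fun i => if i ≤ #s then X i else insert a s, by simp [h0], by simp [has], ?_, ?_⟩
    · intro i hi
      rw [card_insert_of_notMem has] at hi
      rcases Nat.lt_or_eq_of_le (Nat.lt_succ_iff.1 hi) with hi | rfl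
      · simpa [hi.le, Nat.succ_le_of_lt hi] using hchain i hi
      · simpa [hs] using ssubset_insert has
    · intro i
      dsimp only
      split_ifs
      · exact (hsub i).trans (subset_insert a s)
      · exact subset_rfl

section SimplicialMatroid

variable {𝔽 : Type*} [Field 𝔽] {n k : ℕ}

lemma subset_of_inc_ne_zero {F' F : Finset (Fin n)} (h : inc F' F ≠ 0) : F' ⊆ F := by
  contrapose! h
  refine Finset.sum_eq_zero fun i _ => if_neg ?_
  rintro rfl
  exact h (erase_subset i F)

lemma inc_erase {F : Finset (Fin n)} {i : Fin n} (hi : i ∈ F) :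
    inc (F.erase i) F = (-1 : ℤ) ^ #(F.filter (· ≤ i)) := by
  rw [inc, sum_eq_single_of_mem i hi, if_pos rfl]
  intro j _ hji
  refine if_neg fun he => ?_
  have : i ∈ F.erase j := mem_erase.2 ⟨fun h => hji h.symm, hi⟩
  exact notMem_erase i F (he ▸ this)

lemma inc_erase_ne_zero {F : Finset (Fin n)} {i : Fin n} (hi : i ∈ F) :
    ((inc (F.erase i) F : ℤ) : 𝔽) ≠ 0 := by
  rw [inc_erase hi]
  push_cast
  exact pow_ne_zero _ (neg_ne_zero.2 one_ne_zero)

lemma exists_erase_subset_of_bvec_mem_span {T : Set (Finset (Fin n))} {g : Finset (Fin n)}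
    (hg : #g = k) (hspan : bvec 𝔽 n k g ∈ Submodule.span 𝔽 ((fun F => bvec 𝔽 n k F) '' T))
    {i : Fin n} (hi : i ∈ g) : ∃ e ∈ T, g.erase i ⊆ e := by
  by_contra! h
  let c : Csets n (k - 1) := ⟨g.erase i, by rw [card_erase_of_mem hi, hg]⟩
  have hker : (fun F => bvec 𝔽 n k F) '' T ⊆
      LinearMap.ker (LinearMap.proj c : (Csets n (k - 1) → 𝔽) →ₗ[𝔽] 𝔽) := by
    rintro _ ⟨e, he, rfl⟩
    have : inc (g.erase i) e = 0 := by
      by_contra h0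
      exact h e he (subset_of_inc_ne_zero h0)
    simp [bvec, c, this]
  exact inc_erase_ne_zero hi (Submodule.span_le.2 hker hspan)

lemma bvec_notMem_span_of_card_lt {T : Finset (Finset (Fin n))} (hT : ∀ e ∈ T, #e = k)
    {g : Finset (Fin n)} (hg : #g = k) (hgT : g ∉ T) (hTk : #T < k) :
    bvec 𝔽 n k g ∉ Submodule.span 𝔽 ((fun F => bvec 𝔽 n k F) '' (T : Set (Finset (Fin n)))) := by
  intro hspan
  choose! φ hφT hφ using fun i (hi : i ∈ g) => exists_erase_subset_of_bvec_mem_span hg hspan hi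
  obtain ⟨i, hi, j, hj, hij, hφij⟩ := exists_ne_map_eq_of_card_lt_of_maps_to (hg ▸ hTk) hφT
  have hsub : g ⊆ φ i :=
    Finset.subset_of_erase_subset_of_erase_subset hij (hφ i hi) (hφij ▸ hφ j hj)
  have hgφ : g = φ i := eq_of_subset_of_card_le hsub (by rw [hT _ (hφT i hi), hg])
  exact hgT (hgφ ▸ hφT i hi)

lemma linearIndepOn_bvec_of_card_le {T : Finset (Finset (Fin n))} (hT : ∀ e ∈ T, #e = k)
    (hTk : #T ≤ k) : LinearIndepOn 𝔽 (fun F => bvec 𝔽 n k F) (T : Set (Finset (Fin n))) := by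
  classical
  induction T using Finset.induction_on with
  | empty => simp
  | insert g T hgT ih =>
    rw [card_insert_of_notMem hgT] at hTk
    rw [coe_insert, linearIndepOn_insert (by simpa using hgT)]
    have hT' : ∀ e ∈ T, #e = k := fun e he => hT e (mem_insert_of_mem he)
    exact ⟨ih hT' (by omega),
      bvec_notMem_span_of_card_lt hT' (hT g (mem_insert_self g T)) hgT (by omega)⟩

lemma simRank_empty : simRank 𝔽 n k ∅ = 0 := by
  simp [simRank]

lemma simRank_mono {X Y : Finset (Finset (Fin n))} (h : X ⊆ Y) :
    simRank 𝔽 n k X ≤ simRank 𝔽 n k Y :=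
  Submodule.finrank_mono (Submodule.span_mono (Set.image_mono (coe_subset.2 h)))

lemma linearIndependent_bvec_iff_card_le_simRank (X : Finset (Finset (Fin n))) :
    LinearIndependent 𝔽 (fun F : X => bvec 𝔽 n k F.1) ↔ #X ≤ simRank 𝔽 n k X := by
  rw [linearIndependent_iff_card_le_finrank_span, Fintype.card_coe, Set.finrank, simRank,
    Set.image_eq_range]
  rfl

lemma simRank_le_card (X : Finset (Finset (Fin n))) : simRank 𝔽 n k X ≤ #X := by
  rw [simRank, Set.image_eq_range, ← Fintype.card_coe]
  exact finrank_range_le_card _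

lemma simRank_eq_card_of_linearIndependent {Sk X : Finset (Finset (Fin n))} (hXS : X ⊆ Sk)
    (hli : LinearIndependent 𝔽 (fun F : Sk => bvec 𝔽 n k F.1)) : simRank 𝔽 n k X = #X := by
  have hX : LinearIndepOn 𝔽 (fun F => bvec 𝔽 n k F) (X : Set (Finset (Fin n))) :=
    LinearIndepOn.mono hli (coe_subset.2 hXS)
  exact (simRank_le_card X).antisymm ((linearIndependent_bvec_iff_card_le_simRank X).1 hX)

lemma mem_simClosure {Sk X : Finset (Finset (Fin n))} {F : Finset (Fin n)} :
    F ∈ simClosure 𝔽 n k Sk X ↔ F ∈ Sk ∧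
      bvec 𝔽 n k F ∈ Submodule.span 𝔽 ((fun G => bvec 𝔽 n k G) '' (X : Set (Finset (Fin n)))) := by
  classical
  simp [simClosure]

lemma span_bvec_simClosure {Sk X : Finset (Finset (Fin n))} (hX : X ⊆ Sk) :
    Submodule.span 𝔽 ((fun G => bvec 𝔽 n k G) '' (simClosure 𝔽 n k Sk X : Set (Finset (Fin n)))) =
      Submodule.span 𝔽 ((fun G => bvec 𝔽 n k G) '' (X : Set (Finset (Fin n)))) := by
  refine le_antisymm (Submodule.span_le.2 ?_) (Submodule.span_mono (Set.image_mono ?_))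
  · rintro _ ⟨F, hF, rfl⟩
    exact (mem_simClosure.1 hF).2
  · intro F hF
    exact mem_simClosure.2 ⟨hX hF, Submodule.subset_span ⟨F, hF, rfl⟩⟩

lemma simRank_simClosure {Sk X : Finset (Finset (Fin n))} (hX : X ⊆ Sk) :
    simRank 𝔽 n k (simClosure 𝔽 n k Sk X) = simRank 𝔽 n k X := by
  rw [simRank, simRank, span_bvec_simClosure hX]

lemma simFlat_simClosure {Sk X : Finset (Finset (Fin n))} (hX : X ⊆ Sk) :
    SimFlat 𝔽 n k Sk (simClosure 𝔽 n k Sk X) := by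
  refine ⟨fun F hF => (mem_simClosure.1 hF).1, fun F hF hspan => ?_⟩
  rw [span_bvec_simClosure hX] at hspan
  exact mem_simClosure.2 ⟨hF, hspan⟩

lemma simClosure_subset_of_simFlat {Sk X Z : Finset (Finset (Fin n))}
    (hZ : SimFlat 𝔽 n k Sk Z) (hXZ : X ⊆ Z) : simClosure 𝔽 n k Sk X ⊆ Z := by
  intro F hF
  obtain ⟨hFS, hspan⟩ := mem_simClosure.1 hF
  exact hZ.2 F hFS (Submodule.span_mono (Set.image_mono (coe_subset.2 hXZ)) hspan)

lemma simClosure_empty (hk : 0 < k) {Sk : Finset (Finset (Fin n))} (hSk : ∀ F ∈ Sk, #F = k) :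
    simClosure 𝔽 n k Sk ∅ = ∅ := by
  refine eq_empty_of_forall_notMem fun F hF => ?_
  obtain ⟨hFS, hspan⟩ := mem_simClosure.1 hF
  exact bvec_notMem_span_of_card_lt (by simp) (hSk F hFS) (notMem_empty F) hk hspan

lemma simRank_lt_of_ssubset {Sk X Y : Finset (Finset (Fin n))} (hX : SimFlat 𝔽 n k Sk X)
    (hXY : X ⊂ Y) (hY : Y ⊆ Sk) : simRank 𝔽 n k X < simRank 𝔽 n k Y := by
  obtain ⟨F, hFY, hFX⟩ := exists_of_ssubset hXY
  refine (simRank_mono hXY.subset).lt_of_ne fun heq => hFX (hX.2 F (hY hFY) ?_)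
  have hspan := Submodule.eq_of_le_of_finrank_eq
    (Submodule.span_mono (Set.image_mono (coe_subset.2 hXY.subset))) heq
  exact hspan ▸ Submodule.subset_span ⟨F, hFY, rfl⟩

lemma card_sdiff_le_one_of_modularFlat (hk : 3 ≤ k) {Sk X Z : Finset (Finset (Fin n))}
    (hSk : ∀ F ∈ Sk, #F = k) (hX : ModularFlat 𝔽 n k Sk X) (hZ : SimFlat 𝔽 n k Sk Z)
    (hXZ : X ⊆ Z) (hr : simRank 𝔽 n k Z ≤ simRank 𝔽 n k X + 1) : #(Z \ X) ≤ 1 := by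
  by_contra! h
  obtain ⟨e, he, f, hf, hef⟩ := one_lt_card.1 h
  rw [mem_sdiff] at he hf
  have hpair : ∀ G ∈ ({e, f} : Finset (Finset (Fin n))), #G = k := by
    simpa using ⟨hSk e (hZ.1 he.1), hSk f (hZ.1 hf.1)⟩
  have hpairZ : {e, f} ⊆ Z := insert_subset he.1 (singleton_subset_iff.2 hf.1)
  set Y := simClosure 𝔽 n k Sk {e, f}
  have hY : simRank 𝔽 n k Y = 2 := by
    rw [simRank_simClosure (hpairZ.trans hZ.1), ← card_pair hef]
    exact simRank_eq_card_of_linearIndependent subset_rfl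
      (linearIndepOn_bvec_of_card_le hpair (by rw [card_pair hef]; omega))
  have hmod := hX.2 Y (simFlat_simClosure (hpairZ.trans hZ.1))
  have hYZ : Y ⊆ Z := simClosure_subset_of_simFlat hZ hpairZ
  have hunion := simRank_mono (𝔽 := 𝔽) (k := k) (union_subset hXZ hYZ)
  obtain ⟨g, hg⟩ : (X ∩ Y).Nonempty := by
    rw [nonempty_iff_ne_empty]
    intro hempty
    rw [hempty, simRank_empty] at hmod
    omega
  obtain ⟨hgX, hgY⟩ := mem_inter.1 hg
  obtain ⟨hgS, hspan⟩ := mem_simClosure.1 hgY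
  have hgef : g ∉ ({e, f} : Finset (Finset (Fin n))) := by
    simp only [mem_insert, mem_singleton, not_or]
    exact ⟨fun h => he.2 (h ▸ hgX), fun h => hf.2 (h ▸ hgX)⟩
  exact bvec_notMem_span_of_card_lt hpair (hSk g hgS) hgef (by rw [card_pair hef]; omega) hspan

lemma linearIndependent_of_supersolvable (hk : 3 ≤ k) {Sk : Finset (Finset (Fin n))}
    (hSk : ∀ F ∈ Sk, #F = k) (hss : Supersolvable 𝔽 n k Sk) :
    LinearIndependent 𝔽 (fun F : Sk => bvec 𝔽 n k F.1) := by
  obtain ⟨X, h0, hr, hchain, hmod⟩ := hss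
  set r := simRank 𝔽 n k Sk
  have hflat : ∀ i ≤ r, SimFlat 𝔽 n k Sk (X i) := fun i hi => (hmod i hi).1
  have hrank : ∀ i ≤ r, simRank 𝔽 n k (X i) = i :=
    apply_eq_self_of_lt_apply_succ (f := fun i => simRank 𝔽 n k (X i))
      (fun i hi => simRank_lt_of_ssubset (hflat i hi.le) (hchain i hi) (hflat (i + 1) hi).1)
      (by simp only [hr, r])
  have hcard : ∀ i ≤ r, #(X i) ≤ i := by
    intro i
    induction i with
    | zero => intro _; simp [h0, simClosure_empty (by omega : 0 < k) hSk]
    | succ i ih =>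
      intro hi
      have hstep := card_sdiff_le_one_of_modularFlat hk hSk (hmod i (by omega)) (hflat (i + 1) hi)
        (hchain i hi).subset (by rw [hrank i (by omega), hrank (i + 1) hi])
      have := card_sdiff_add_card_eq_card (hchain i hi).subset
      have := ih (by omega)
      omega
  rw [linearIndependent_bvec_iff_card_le_simRank]
  simpa [hr] using hcard r le_rfl

lemma simFlat_of_linearIndependent {Sk X : Finset (Finset (Fin n))} (hXS : X ⊆ Sk)
    (hli : LinearIndependent 𝔽 (fun F : Sk => bvec 𝔽 n k F.1)) : SimFlat 𝔽 n k Sk X := by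
  refine ⟨hXS, fun F hF hspan => by_contra fun hFX => ?_⟩
  have hins : LinearIndepOn 𝔽 (fun G => bvec 𝔽 n k G) (insert F (X : Set (Finset (Fin n)))) :=
    LinearIndepOn.mono hli (Set.insert_subset hF (coe_subset.2 hXS))
  exact hins.notMem_span_of_insert hFX hspan

lemma modularFlat_of_linearIndependent {Sk X : Finset (Finset (Fin n))} (hXS : X ⊆ Sk)
    (hli : LinearIndependent 𝔽 (fun F : Sk => bvec 𝔽 n k F.1)) : ModularFlat 𝔽 n k Sk X := by
  classical
  refine ⟨simFlat_of_linearIndependent hXS hli, fun Y hY => ?_⟩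
  rw [simRank_eq_card_of_linearIndependent hXS hli, simRank_eq_card_of_linearIndependent hY.1 hli,
    simRank_eq_card_of_linearIndependent (union_subset hXS hY.1) hli,
    simRank_eq_card_of_linearIndependent (inter_subset_left.trans hXS) hli]
  exact (card_union_add_card_inter X Y).symm

lemma supersolvable_of_linearIndependent (hk : 0 < k) {Sk : Finset (Finset (Fin n))}
    (hSk : ∀ F ∈ Sk, #F = k) (hli : LinearIndependent 𝔽 (fun F : Sk => bvec 𝔽 n k F.1)) :
    Supersolvable 𝔽 n k Sk := by
  obtain ⟨X, h0, hX, hchain, hsub⟩ := Sk.exists_ssubset_chain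
  have hr : simRank 𝔽 n k Sk = #Sk := simRank_eq_card_of_linearIndependent subset_rfl hli
  refine ⟨X, by rw [h0, simClosure_empty hk hSk], by rwa [hr], by rwa [hr],
    fun i _ => modularFlat_of_linearIndependent (hsub i) hli⟩

lemma forall_not_simCircuit_iff {Sk : Finset (Finset (Fin n))} :
    (∀ C, ¬ SimCircuit 𝔽 n k Sk C) ↔ LinearIndependent 𝔽 (fun F : Sk => bvec 𝔽 n k F.1) := by
  refine ⟨fun h => by_contra fun hdep => ?_, fun hli C hC => hC.2.1 ?_⟩
  · obtain ⟨C, hCS, hmin⟩ := exists_minimal_le_of_wellFoundedLT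
      (fun C : Finset (Finset (Fin n)) => ¬ LinearIndependent 𝔽 (fun F : C => bvec 𝔽 n k F.1))
      Sk hdep
    exact h C ⟨hCS, hmin.prop, fun C' hC' => by_contra fun hC'dep =>
      hC'.not_subset (hmin.2 hC'dep hC'.subset)⟩
  · exact LinearIndepOn.mono (s := (Sk : Set (Finset (Fin n)))) hli (coe_subset.2 hC.1)

end SimplicialMatroid

theorem stmt8_general (𝔽 : Type*) [Field 𝔽] (n k : ℕ) (hk : 2 < k)
    (Sk : Finset (Finset (Fin n))) (hSk : ∀ F ∈ Sk, F.card = k) :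
    (Supersolvable 𝔽 n k Sk ↔ ∀ C, ¬ SimCircuit 𝔽 n k Sk C) ∧
    (Supersolvable 𝔽 n k Sk ↔ LinearIndependent 𝔽 (fun F : Sk => bvec 𝔽 n k F.1)) := by
  have hiff : Supersolvable 𝔽 n k Sk ↔ LinearIndependent 𝔽 (fun F : Sk => bvec 𝔽 n k F.1) :=
    ⟨linearIndependent_of_supersolvable hk hSk, supersolvable_of_linearIndependent (by omega) hSk⟩
  exact ⟨hiff.trans forall_not_simCircuit_iff.symm, hiff⟩

theorem stmt8 (𝔽 : Type*) [Field 𝔽] (n k : ℕ) (hk : 2 < k) (hkn : k ≤ n)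
    (Sk : Finset (Finset (Fin n))) (hSk : ∀ F ∈ Sk, F.card = k) :
    (Supersolvable 𝔽 n k Sk ↔ ∀ C, ¬ SimCircuit 𝔽 n k Sk C) ∧
    (Supersolvable 𝔽 n k Sk ↔ LinearIndependent 𝔽 (fun F : Sk => bvec 𝔽 n k F.1)) :=
  stmt8_general 𝔽 n k hk Sk hSk
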